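/- Let f : ℝ^n × ℝ^n → ℝ^m be a bifunction, C ⊆ ℝ^m a nontrivial closed convex pointed cone, K ⊆ ℝ^n nonempty and closed, and let ϑ : ℝ^n → ℝ be locally Lipschitz around x̄ ∈ Equi. Suppose (i) f is strictly B-differentiable at x̄ uniformly on K with family {D_Bf(x̄,z) : z ∈ K}, and (ii) this family is equicontinuous at each point of ℝ^n. If 0 ∈ ∂̂ϑ(x̄) + int[(⋂_{z∈K} (D_Bf(x̄,z))⁻¹(T(f(x̄,z),C)) ∩ T(x̄,K))°], then x̄ is a strict local minimizer of ϑ over Equi. -/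

import Mathlib

open Filter Metric Set Pointwise
open scoped InnerProductSpace Topology

noncomputable section

/-- `ℝ^d` as a Euclidean space. -/
abbrev Euc (d : ℕ) := EuclideanSpace ℝ (Fin d)

/-- The contingent (Bouligand tangent) cone to `S` at `x`:
`T(x,S) = {v : ∃ vₙ → v, tₙ ↓ 0, x + tₙ vₙ ∈ S for all n}`. -/
def contCone {d : ℕ} (S : Set (Euc d)) (x : Euc d) : Set (Euc d) :=
  {v | ∃ (vs : ℕ → Euc d) (ts : ℕ → ℝ),
    Filter.Tendsto vs Filter.atTop (𝓝 v) ∧ Filter.Tendsto ts Filter.atTop (𝓝 0) ∧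
    (∀ k, 0 < ts k) ∧ ∀ k, x + ts k • vs k ∈ S}

/-- The cone of radial (weak feasible) directions to `S` at `x`:
`W(x,S) = {v : ∀ ε > 0, ∃ t ∈ (0,ε), x + t v ∈ S}`. -/
def radialCone {d : ℕ} (S : Set (Euc d)) (x : Euc d) : Set (Euc d) :=
  {v | ∀ ε > (0:ℝ), ∃ t : ℝ, 0 < t ∧ t < ε ∧ x + t • v ∈ S}

/-- The set of strong vector equilibria: `Equi = {x ∈ K : f(x,z) ∈ C for all z ∈ K}`. -/
def Equi {n m : ℕ} (f : Euc n → Euc n → Euc m) (C : Set (Euc m)) (K : Set (Euc n)) :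
    Set (Euc n) :=
  {x ∈ K | ∀ z ∈ K, f x z ∈ C}

/-- The negative dual (polar) cone `S° = {v : ⟪v,s⟫ ≤ 0 for all s ∈ S}`. -/
def negDualCone {d : ℕ} (S : Set (Euc d)) : Set (Euc d) :=
  {v | ∀ s ∈ S, ⟪v, s⟫_ℝ ≤ 0}

/-- The normal cone of convex analysis `N(x,S) = {v : ⟪v, y - x⟫ ≤ 0 for all y ∈ S}`. -/
def normalCone {d : ℕ} (S : Set (Euc d)) (x : Euc d) : Set (Euc d) :=
  {v | ∀ y ∈ S, ⟪v, y - x⟫_ℝ ≤ 0}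

/-- Dini upper directional derivative (with values in `EReal`). -/
def diniUpper {d : ℕ} (ϑ : Euc d → ℝ) (x w : Euc d) : EReal :=
  Filter.limsup (fun t : ℝ => (((ϑ (x + t • w) - ϑ x) / t : ℝ) : EReal)) (𝓝[>] (0:ℝ))

/-- Dini lower directional derivative (with values in `EReal`). -/
def diniLower {d : ℕ} (ϑ : Euc d → ℝ) (x w : Euc d) : EReal :=
  Filter.liminf (fun t : ℝ => (((ϑ (x + t • w) - ϑ x) / t : ℝ) : EReal)) (𝓝[>] (0:ℝ))

/-- Dini–Hadamard upper directional derivative (with values in `EReal`). -/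
def dhUpper {d : ℕ} (ϑ : Euc d → ℝ) (x w : Euc d) : EReal :=
  Filter.limsup (fun p : Euc d × ℝ => (((ϑ (x + p.2 • p.1) - ϑ x) / p.2 : ℝ) : EReal))
    ((𝓝 w) ×ˢ (𝓝[>] (0:ℝ)))

/-- Dini–Hadamard lower directional derivative (with values in `EReal`). -/
def dhLower {d : ℕ} (ϑ : Euc d → ℝ) (x w : Euc d) : EReal :=
  Filter.liminf (fun p : Euc d × ℝ => (((ϑ (x + p.2 • p.1) - ϑ x) / p.2 : ℝ) : EReal))
    ((𝓝 w) ×ˢ (𝓝[>] (0:ℝ)))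

/-- Fréchet upper subdifferential of a real-valued function. -/
def upperSubdiff {d : ℕ} (ϑ : Euc d → ℝ) (x : Euc d) : Set (Euc d) :=
  {v | Filter.limsup
      (fun y => (((ϑ y - ϑ x - ⟪v, y - x⟫_ℝ) / ‖y - x‖ : ℝ) : EReal)) (𝓝[≠] x) ≤ 0}

/-- Fréchet regular (lower) subdifferential of a real-valued function. -/
def regularSubdiff {d : ℕ} (ϑ : Euc d → ℝ) (x : Euc d) : Set (Euc d) :=
  {v | 0 ≤ Filter.liminf
      (fun y => (((ϑ y - ϑ x - ⟪v, y - x⟫_ℝ) / ‖y - x‖ : ℝ) : EReal)) (𝓝[≠] x)}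

/-! If `xb` were not a strict local minimizer, there would be feasible points `y ≠ xb`
arbitrarily close to `xb` with `ϑ y ≤ ϑ xb`; their normalized directions accumulate at a unit
vector `u` of the contingent cone `T(xb, Equi)`. B-differentiability of `f(·, z)` at `xb` carries
`T(xb, Equi)` into `S = ⋂_z D_z⁻¹ T(f(xb, z), C) ∩ T(xb, K)`, and writing `0 = v + w` with
`v ∈ ∂̂ϑ(xb)` and `w ∈ int S°`, the interior point `w` is strictly negative on `S \ {0}`, so `⟪v, u⟫ > 0`. On the
other hand `v` is a Fréchet subgradient and `ϑ` does not increase along the sequence, which forces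
`⟪v, u⟫ ≤ 0`. -/

theorem inner_neg_of_mem_interior_negDualCone {d : ℕ} {S : Set (Euc d)} {w s : Euc d}
    (hw : w ∈ interior (negDualCone S)) (hs : s ∈ S) (hs0 : s ≠ 0) : ⟪w, s⟫_ℝ < 0 := by
  have hlim : Tendsto (fun t : ℝ => w + t • s) (𝓝[>] 0) (𝓝 w) := by
    have : Continuous fun t : ℝ => w + t • s := by fun_prop
    simpa using (this.tendsto 0).mono_left nhdsWithin_le_nhds
  obtain ⟨t, hmem, ht⟩ :=
    ((hlim.eventually (mem_interior_iff_mem_nhds.mp hw)).and self_mem_nhdsWithin).exists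
  have hineq := hmem s hs
  rw [inner_add_left, real_inner_smul_left, real_inner_self_eq_norm_sq] at hineq
  have : 0 < t * ‖s‖ ^ 2 := mul_pos ht (by positivity)
  linarith

theorem contCone_mono {d : ℕ} {S T : Set (Euc d)} (hST : S ⊆ T) (x : Euc d) :
    contCone S x ⊆ contCone T x :=
  fun _ ⟨vs, ts, hvs, hts, hpos, hmem⟩ => ⟨vs, ts, hvs, hts, hpos, fun k => hST (hmem k)⟩

theorem mem_contCone_image_of_isLittleO {n m : ℕ} {g A : Euc n → Euc m} {S : Set (Euc n)}
    {x v : Euc n} (hg : (fun y => g y - g x - A (y - x)) =o[𝓝 x] (fun y => y - x))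
    (hA : ContinuousAt A v) (hAph : ∀ t : ℝ, 0 < t → ∀ u, A (t • u) = t • A u)
    (hv : v ∈ contCone S x) : A v ∈ contCone (g '' S) (g x) := by
  obtain ⟨vs, ts, hvs, hts, hpos, hmem⟩ := hv
  set ws := fun k => (ts k)⁻¹ • (g (x + ts k • vs k) - g x)
  refine ⟨ws, ts, ?_, hts, hpos, fun k => ⟨_, hmem k, ?_⟩⟩
  · have hys : Tendsto (fun k => x + ts k • vs k) atTop (𝓝 x) := by
      simpa using tendsto_const_nhds.add (hts.smul hvs)
    have hstep : (fun k => x + ts k • vs k - x) =O[atTop] ts := by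
      simpa using (Asymptotics.isBigO_refl ts atTop).smul (hvs.isBigO_one ℝ)
    have hrem : (fun k => g (x + ts k • vs k) - g x - A (ts k • vs k)) =o[atTop] ts := by
      simpa [Function.comp_def] using (hg.comp_tendsto hys).trans_isBigO hstep
    have hdiff : Tendsto (fun k => ws k - A (vs k)) atTop (𝓝 0) := by
      convert hrem.tendsto_inv_smul_nhds_zero using 2 with k
      simp [ws, hAph _ (hpos k), smul_sub, inv_smul_smul₀ (hpos k).ne']
    simpa using hdiff.add (hA.tendsto.comp hvs)
  · simp [ws, smul_inv_smul₀ (hpos k).ne']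

theorem contCone_Equi_subset {n m : ℕ} {f D : Euc n → Euc n → Euc m} {C : Set (Euc m)}
    {K : Set (Euc n)} {x : Euc n}
    (hB : ∀ z ∈ K, (fun y => f y z - f x z - D z (y - x)) =o[𝓝 x] (fun y => y - x))
    (hDcont : ∀ z ∈ K, Continuous (D z))
    (hDph : ∀ z ∈ K, ∀ t : ℝ, 0 < t → ∀ v, D z (t • v) = t • D z v) :
    contCone (Equi f C K) x ⊆ (⋂ z ∈ K, D z ⁻¹' contCone C (f x z)) ∩ contCone K x := by
  intro v hv
  refine ⟨mem_iInter₂.mpr fun z hz => ?_, contCone_mono (fun _ hy => hy.1) x hv⟩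
  have hfC : (fun y => f y z) '' Equi f C K ⊆ C :=
    image_subset_iff.mpr fun (y : Euc n) (hy : y ∈ Equi f C K) => hy.2 z hz
  exact contCone_mono hfC _ <| mem_contCone_image_of_isLittleO (g := fun y => f y z) (hB z hz)
    (hDcont z hz).continuousAt (hDph z hz) hv

theorem exists_unit_mem_contCone_of_tendsto {d : ℕ} {S : Set (Euc d)} {x : Euc d}
    {y : ℕ → Euc d} (hy : Tendsto y atTop (𝓝 x)) (hne : ∀ k, y k ≠ x) (hyS : ∀ k, y k ∈ S) :
    ∃ u ∈ contCone S x, ‖u‖ = 1 ∧ ∃ φ : ℕ → ℕ, StrictMono φ ∧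
      Tendsto (fun k => ‖y (φ k) - x‖⁻¹ • (y (φ k) - x)) atTop (𝓝 u) := by
  have hdist : ∀ k, 0 < ‖y k - x‖ := fun k => norm_pos_iff.mpr (sub_ne_zero.mpr (hne k))
  have hunit : ∀ k, ‖y k - x‖⁻¹ • (y k - x) ∈ sphere (0 : Euc d) 1 := fun k => by
    simp [norm_smul, (hdist k).ne']
  obtain ⟨u, hu, φ, hφ, hlim⟩ := (isCompact_sphere 0 1).tendsto_subseq hunit
  refine ⟨u, ⟨_, fun k => ‖y (φ k) - x‖, hlim, ?_, fun k => hdist (φ k), fun k => ?_⟩,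
    by simpa using hu, φ, hφ, hlim⟩
  · exact (tendsto_iff_norm_sub_tendsto_zero.mp hy).comp hφ.tendsto_atTop
  · simpa [smul_inv_smul₀ (hdist (φ k)).ne'] using hyS (φ k)

theorem inner_nonpos_of_mem_regularSubdiff {d : ℕ} {ϑ : Euc d → ℝ} {x v u : Euc d}
    (hv : v ∈ regularSubdiff ϑ x) {y : ℕ → Euc d} (hy : Tendsto y atTop (𝓝 x))
    (hne : ∀ k, y k ≠ x) (hdir : Tendsto (fun k => ‖y k - x‖⁻¹ • (y k - x)) atTop (𝓝 u))
    (hle : ∀ k, ϑ (y k) ≤ ϑ x) : ⟪v, u⟫_ℝ ≤ 0 := by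
  by_contra! hpos
  have hy' : Tendsto y atTop (𝓝[≠] x) := tendsto_nhdsWithin_iff.mpr ⟨hy, .of_forall hne⟩
  have hquot : ∀ᶠ k in atTop,
      -(⟪v, u⟫_ℝ / 2) < (ϑ (y k) - ϑ x - ⟪v, y k - x⟫_ℝ) / ‖y k - x‖ := by
    have hneg : ((-(⟪v, u⟫_ℝ / 2) : ℝ) : EReal) < 0 := by exact_mod_cast (by linarith)
    filter_upwards [hy'.eventually (eventually_lt_of_lt_liminf (hneg.trans_le hv))] with k hk
    exact_mod_cast hk
  have hinner : ∀ᶠ k in atTop, ⟪v, u⟫_ℝ / 2 < ⟪v, ‖y k - x‖⁻¹ • (y k - x)⟫_ℝ :=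
    (tendsto_const_nhds.inner hdir).eventually (eventually_gt_nhds (by linarith))
  obtain ⟨k, hqk, hik⟩ := (hquot.and hinner).exists
  have hdist : 0 < ‖y k - x‖ := norm_pos_iff.mpr (sub_ne_zero.mpr (hne k))
  rw [lt_div_iff₀ hdist] at hqk
  rw [real_inner_smul_right, lt_inv_mul_iff₀ hdist] at hik
  linarith [hle k]

theorem eventually_lt_of_mem_regularSubdiff_of_inner_pos {d : ℕ} {ϑ : Euc d → ℝ}
    {E : Set (Euc d)} {x v : Euc d} (hv : v ∈ regularSubdiff ϑ x)
    (hpos : ∀ u ∈ contCone E x, u ≠ 0 → 0 < ⟪v, u⟫_ℝ) :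
    ∀ᶠ y in 𝓝[≠] x, y ∈ E → ϑ x < ϑ y := by
  by_contra h
  simp only [not_eventually, Classical.not_imp, not_lt, frequently_nhdsWithin_iff] at h
  obtain ⟨y, hy, hyp⟩ := exists_seq_forall_of_frequently h
  obtain ⟨u, huE, hu1, φ, hφ, hdir⟩ :=
    exists_unit_mem_contCone_of_tendsto hy (fun k => (hyp k).2) (fun k => (hyp k).1.1)
  exact (hpos u huE (by rintro rfl; simp at hu1)).not_ge <|
    inner_nonpos_of_mem_regularSubdiff hv (hy.comp hφ.tendsto_atTop) (fun k => (hyp _).2) hdir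
      fun k => (hyp _).1.2

theorem sufficient_optimality_condition_general {n m : ℕ}
    (f : Euc n → Euc n → Euc m) (C : Set (Euc m)) (K : Set (Euc n))
    (ϑ : Euc n → ℝ) (xb : Euc n)
    (D : Euc n → Euc n → Euc m)
    (hDcont : ∀ z ∈ K, Continuous (D z))
    (hDph : ∀ z ∈ K, ∀ t : ℝ, 0 < t → ∀ v, D z (t • v) = t • D z v)
    (hStrict : ∀ ε > (0:ℝ), ∃ δ > (0:ℝ), ∀ x₁ ∈ ball xb δ, ∀ x₂ ∈ ball xb δ, ∀ z ∈ K,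
      ‖f x₁ z - f x₂ z - D z (x₁ - x₂)‖ ≤ ε * ‖x₁ - x₂‖)
    (hcond : (0 : Euc n) ∈ regularSubdiff ϑ xb +
      interior (negDualCone
        ((⋂ z ∈ K, D z ⁻¹' (contCone C (f xb z))) ∩ contCone K xb))) :
    ∃ U ∈ 𝓝 xb, ∀ x ∈ Equi f C K ∩ U, x ≠ xb → ϑ xb < ϑ x := by
  obtain ⟨v, hv, w, hw, hvw⟩ := Set.mem_add.mp hcond
  have hB : ∀ z ∈ K,
      (fun y => f y z - f xb z - D z (y - xb)) =o[𝓝 xb] (fun y => y - xb) := by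
    intro z hz
    refine Asymptotics.isLittleO_iff.mpr fun ε hε => ?_
    obtain ⟨δ, hδ, hδs⟩ := hStrict ε hε
    filter_upwards [ball_mem_nhds xb hδ] with y hy
    exact hδs y hy xb (mem_ball_self hδ) z hz
  have hpos : ∀ u ∈ contCone (Equi f C K) xb, u ≠ 0 → 0 < ⟪v, u⟫_ℝ := fun u hu hu0 => by
    rw [eq_neg_of_add_eq_zero_left hvw, inner_neg_left, neg_pos]
    exact inner_neg_of_mem_interior_negDualCone hw (contCone_Equi_subset hB hDcont hDph hu) hu0
  obtain ⟨U, hU, hlt⟩ := eventually_iff_exists_mem.mp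
    (eventually_nhdsWithin_iff.mp (eventually_lt_of_mem_regularSubdiff_of_inner_pos hv hpos))
  exact ⟨U, hU, fun x hx hne => hlt x hx.2 hne hx.1⟩

/-- **Sufficient optimality condition** (Theorem 4.7): under strict uniform
B-differentiability and equicontinuity, if
`0 ∈ ∂̂ϑ(xb) + int[(⋂_{z∈K} (D_Bf(xb,z))⁻¹(T(f(xb,z),C)) ∩ T(xb,K))°]`,
then `xb` is a strict local minimizer of `ϑ` over `Equi`. -/
theorem sufficient_optimality_condition {n m : ℕ}
    (f : Euc n → Euc n → Euc m) (C : Set (Euc m)) (K : Set (Euc n))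
    (hCclosed : IsClosed C) (hCconvex : Convex ℝ C)
    (hCzero : (0 : Euc m) ∈ C)
    (hCcone : ∀ c ∈ C, ∀ t : ℝ, 0 < t → t • c ∈ C)
    (hCpointed : ∀ c ∈ C, -c ∈ C → c = 0)
    (hCnontrivial : ∃ c ∈ C, c ≠ 0)
    (hKne : K.Nonempty) (hKclosed : IsClosed K)
    (ϑ : Euc n → ℝ) (xb : Euc n) (hxb : xb ∈ Equi f C K)
    (hlip : ∃ L : NNReal, ∃ U ∈ 𝓝 xb, LipschitzOnWith L ϑ U)
    (D : Euc n → Euc n → Euc m)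
    (hDcont : ∀ z ∈ K, Continuous (D z))
    (hDph : ∀ z ∈ K, ∀ t : ℝ, 0 < t → ∀ v, D z (t • v) = t • D z v)
    (hStrict : ∀ ε > (0:ℝ), ∃ δ > (0:ℝ), ∀ x₁ ∈ ball xb δ, ∀ x₂ ∈ ball xb δ, ∀ z ∈ K,
      ‖f x₁ z - f x₂ z - D z (x₁ - x₂)‖ ≤ ε * ‖x₁ - x₂‖)
    (hEqui : Equicontinuous (fun z : {z // z ∈ K} => D z.1))
    (hcond : (0 : Euc n) ∈ regularSubdiff ϑ xb +
      interior (negDualCone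
        ((⋂ z ∈ K, D z ⁻¹' (contCone C (f xb z))) ∩ contCone K xb))) :
    ∃ U ∈ 𝓝 xb, ∀ x ∈ Equi f C K ∩ U, x ≠ xb → ϑ xb < ϑ x :=
  sufficient_optimality_condition_general f C K ϑ xb D hDcont hDph hStrict hcond
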